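/- There exist a compatible pair of separable density matrices ρ₁₂ on ℂ²⊗ℂ² and ρ₂₃ on ℂ²⊗ℂ² (i.e. Tr₁ ρ₁₂ = Tr₃ ρ₂₃) which admit no common extension: no density matrix ρ₁₂₃ on ℂ²⊗ℂ²⊗ℂ² satisfies Tr₃ ρ₁₂₃ = ρ₁₂ and Tr₁ ρ₁₂₃ = ρ₂₃. -/

import Mathlib

/-!
In `ρ₁₂ = ½(|00⟩⟨00| + |11⟩⟨11|)` qubits 1 and 2 are perfectly correlated in the `σz` basis, in
`ρ₂₃ = ½(|++⟩⟨++| + |−−⟩⟨−−|)` qubits 2 and 3 are perfectly correlated in the `σx` basis, and both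
have the maximally mixed marginal on qubit 2. A common extension `ρ` would give expectation `1` to
the involutions `A = σz ⊗ σz ⊗ 1` and `B = 1 ⊗ σx ⊗ σx`; since `ρ ⪰ 0` and `(1 - A)² = 2(1 - A)`,
this forces `ρA = ρ`, and likewise `ρB = ρ`. As `A` and `B` anticommute,
`ρ = ρAB = -ρBA = -ρ`, contradicting `Tr ρ = 1`.
-/

open Matrix Kronecker BigOperators
open scoped ComplexOrder
noncomputable section

/-- A density matrix: positive semidefinite with trace one. -/
def IsDensityMatrix {n : Type*} [Fintype n] (ρ : Matrix n n ℂ) : Prop :=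
  ρ.PosSemidef ∧ ρ.trace = 1

/-- Partial trace over the second (right) tensor factor. -/
def ptraceRight {A B : Type*} [Fintype B] (ρ : Matrix (A × B) (A × B) ℂ) :
    Matrix A A ℂ :=
  Matrix.of fun x y => ∑ k, ρ (x, k) (y, k)

/-- Partial trace over the first (left) tensor factor. -/
def ptraceLeft {A B : Type*} [Fintype A] (ρ : Matrix (A × B) (A × B) ℂ) :
    Matrix B B ℂ :=
  Matrix.of fun x y => ∑ k, ρ (k, x) (k, y)

/-- Partial trace over the first factor of a tripartite state indexed by `(A × B) × C`. -/
def ptrace1of3 {A B C : Type*} [Fintype A]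
    (ρ : Matrix ((A × B) × C) ((A × B) × C) ℂ) : Matrix (B × C) (B × C) ℂ :=
  Matrix.of fun x y => ∑ j, ρ ((j, x.1), x.2) ((j, y.1), y.2)

/-- Partial trace over the first and third factors. -/
def ptrace13 {A B C : Type*} [Fintype A] [Fintype C]
    (ρ : Matrix ((A × B) × C) ((A × B) × C) ℂ) : Matrix B B ℂ :=
  Matrix.of fun x y => ∑ j, ∑ k, ρ ((j, x), k) ((j, y), k)

/-- The von Neumann entropy `S(ρ) = -Tr (ρ log ρ)`, computed via eigenvalues. -/
def vnEntropy {n : Type*} [Fintype n] [DecidableEq n] (ρ : Matrix n n ℂ) : ℝ :=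
  if h : ρ.IsHermitian then -∑ i, h.eigenvalues i * Real.log (h.eigenvalues i) else 0

/-- A bipartite density matrix is separable if it is a convex combination of products of
density matrices. -/
def SeparableState {A B : Type*} [Fintype A] [Fintype B]
    (ρ : Matrix (A × B) (A × B) ℂ) : Prop :=
  ∃ (n : ℕ) (lam : Fin n → ℝ) (σ : Fin n → Matrix A A ℂ) (τ : Fin n → Matrix B B ℂ),
    (∀ j, 0 ≤ lam j) ∧ (∑ j, lam j = 1) ∧
    (∀ j, IsDensityMatrix (σ j)) ∧ (∀ j, IsDensityMatrix (τ j)) ∧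
    ρ = ∑ j, (lam j : ℂ) • (σ j ⊗ₖ τ j)

namespace Matrix

variable {n m : Type*}

theorem IsHermitian.kronecker {A : Matrix n n ℂ} {B : Matrix m m ℂ} (hA : A.IsHermitian)
    (hB : B.IsHermitian) : (A ⊗ₖ B).IsHermitian := by
  rw [IsHermitian, conjTranspose_kronecker, hA, hB]

variable [Fintype n]

theorem kronecker_mul_self_eq_one [Fintype m] [DecidableEq n] [DecidableEq m]
    {A : Matrix n n ℂ} {B : Matrix m m ℂ} (hA : A * A = 1) (hB : B * B = 1) :
    (A ⊗ₖ B) * (A ⊗ₖ B) = 1 := by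
  rw [← mul_kronecker_mul, hA, hB, one_kronecker_one]

open scoped MatrixOrder in
theorem PosSemidef.exists_eq_conjTranspose_mul_self {ρ : Matrix n n ℂ} (hρ : ρ.PosSemidef) :
    ∃ B : Matrix n n ℂ, ρ = Bᴴ * B := by
  classical
  exact CStarAlgebra.nonneg_iff_eq_star_mul_self.mp hρ.nonneg

theorem PosSemidef.mul_eq_zero_of_trace_conjTranspose_mul_mul_eq_zero [Fintype m]
    {ρ : Matrix n n ℂ} (hρ : ρ.PosSemidef) {M : Matrix n m ℂ} (h : (Mᴴ * ρ * M).trace = 0) :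
    ρ * M = 0 := by
  obtain ⟨B, rfl⟩ := hρ.exists_eq_conjTranspose_mul_self
  have hBM : B * M = 0 := by
    rw [← trace_conjTranspose_mul_self_eq_zero_iff, conjTranspose_mul]
    simpa only [Matrix.mul_assoc] using h
  rw [Matrix.mul_assoc, hBM, Matrix.mul_zero]

theorem PosSemidef.mul_eq_self_of_trace_mul_eq_trace [DecidableEq n] {ρ A : Matrix n n ℂ}
    (hρ : ρ.PosSemidef) (hA : A.IsHermitian) (hAA : A * A = 1)
    (h : (ρ * A).trace = ρ.trace) : ρ * A = ρ := by
  have hsq : (1 - A) * (1 - A) = (2 : ℂ) • (1 - A) := by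
    rw [sub_mul, mul_sub, mul_sub, hAA, Matrix.mul_one, Matrix.one_mul, Matrix.mul_one, two_smul]
    abel
  have hM : ((1 - A)ᴴ * ρ * (1 - A)).trace = 0 :=
    calc ((1 - A)ᴴ * ρ * (1 - A)).trace = (ρ * ((1 - A) * (1 - A))).trace := by
          rw [conjTranspose_sub, conjTranspose_one, hA.eq, trace_mul_cycle, trace_mul_comm]
      _ = 2 * (ρ.trace - (ρ * A).trace) := by
          rw [hsq, Matrix.mul_smul, trace_smul, Matrix.mul_sub, Matrix.mul_one, trace_sub,
            smul_eq_mul]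
      _ = 0 := by rw [h, sub_self, mul_zero]
  have hρM := hρ.mul_eq_zero_of_trace_conjTranspose_mul_mul_eq_zero hM
  rwa [Matrix.mul_sub, Matrix.mul_one, sub_eq_zero, eq_comm] at hρM

theorem posSemidef_half_smul_one_add [DecidableEq n] {A : Matrix n n ℂ} (hA : A.IsHermitian)
    (hAA : A * A = 1) : ((1 / 2 : ℂ) • (1 + A)).PosSemidef := by
  set P := (1 / 2 : ℂ) • (1 + A)
  have hP : Pᴴ * P = P := by
    simp only [P, conjTranspose_smul, conjTranspose_add, conjTranspose_one, hA.eq,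
      smul_mul_smul, add_mul, mul_add, hAA, Matrix.one_mul, Matrix.mul_one]
    rw [add_comm A 1, ← two_smul ℂ, smul_smul]
    norm_num
  exact hP ▸ posSemidef_conjTranspose_mul_self P

end Matrix

theorem eq_neg_of_mul_eq_self_of_anticommute {R : Type*} [Ring R] {ρ a b : R}
    (ha : ρ * a = ρ) (hb : ρ * b = ρ) (hab : a * b = -(b * a)) : ρ = -ρ :=
  calc ρ = ρ * a * b := by rw [ha, hb]
    _ = -(ρ * b * a) := by rw [mul_assoc, hab, mul_neg, ← mul_assoc]
    _ = -ρ := by rw [hb, ha]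

section PartialTrace

variable {A B C : Type*} [Fintype A] [Fintype B] [Fintype C]

theorem trace_mul_kronecker_one [DecidableEq B] (ρ : Matrix (A × B) (A × B) ℂ)
    (M : Matrix A A ℂ) : (ρ * (M ⊗ₖ (1 : Matrix B B ℂ))).trace = (ptraceRight ρ * M).trace := by
  simp only [trace, diag_apply, mul_apply, kroneckerMap_apply, one_apply, mul_ite, mul_one,
    mul_zero, Fintype.sum_prod_type, Finset.sum_ite_eq', Finset.mem_univ, if_true, ptraceRight,
    of_apply, Finset.sum_mul]
  exact Finset.sum_congr rfl fun _ _ => Finset.sum_comm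

theorem trace_mul_one_kronecker_kronecker [DecidableEq A]
    (ρ : Matrix ((A × B) × C) ((A × B) × C) ℂ) (M : Matrix B B ℂ) (N : Matrix C C ℂ) :
    (ρ * ((1 : Matrix A A ℂ) ⊗ₖ M ⊗ₖ N)).trace = (ptrace1of3 ρ * (M ⊗ₖ N)).trace := by
  simp only [trace, diag_apply, mul_apply, kroneckerMap_apply, one_apply, ite_mul, one_mul,
    zero_mul, mul_ite, mul_zero, Fintype.sum_prod_type, Finset.sum_ite_irrel,
    Finset.sum_const_zero, Finset.sum_ite_eq', Finset.mem_univ, if_true, ptrace1of3, of_apply,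
    Finset.sum_mul]
  rw [Finset.sum_comm]
  refine Finset.sum_congr rfl fun _ _ => ?_
  rw [Finset.sum_comm]
  refine Finset.sum_congr rfl fun _ _ => ?_
  rw [Finset.sum_comm]
  exact Finset.sum_congr rfl fun _ _ => Finset.sum_comm

end PartialTrace

theorem SeparableState.isDensityMatrix {A B : Type*} [Fintype A] [Fintype B]
    {ρ : Matrix (A × B) (A × B) ℂ} (hρ : SeparableState ρ) : IsDensityMatrix ρ := by
  obtain ⟨n, lam, σ, τ, hlam, hsum, hσ, hτ, rfl⟩ := hρ
  refine ⟨Matrix.posSemidef_sum _ fun j _ => ?_, ?_⟩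
  · exact ((hσ j).1.kronecker (hτ j).1).smul (by exact_mod_cast hlam j)
  · simp only [Matrix.trace_sum, Matrix.trace_smul, Matrix.trace_kronecker, (hσ _).2, (hτ _).2,
      mul_one, smul_eq_mul]
    exact_mod_cast hsum

theorem separableState_half_smul_add {A B : Type*} [Fintype A] [Fintype B]
    {σ₁ σ₂ : Matrix A A ℂ} {τ₁ τ₂ : Matrix B B ℂ} (hσ₁ : IsDensityMatrix σ₁)
    (hσ₂ : IsDensityMatrix σ₂) (hτ₁ : IsDensityMatrix τ₁) (hτ₂ : IsDensityMatrix τ₂) :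
    SeparableState ((1 / 2 : ℂ) • (σ₁ ⊗ₖ τ₁ + σ₂ ⊗ₖ τ₂)) := by
  refine ⟨2, ![1 / 2, 1 / 2], ![σ₁, σ₂], ![τ₁, τ₂], ?_, ?_, ?_, ?_, ?_⟩
  · intro j; fin_cases j <;> norm_num
  · norm_num
  · intro j; fin_cases j <;> assumption
  · intro j; fin_cases j <;> assumption
  · simp only [Fin.sum_univ_two, Matrix.cons_val_zero, Matrix.cons_val_one, smul_add]
    push_cast
    rfl

namespace Qubit

def σz : Matrix (Fin 2) (Fin 2) ℂ := !![1, 0; 0, -1]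
def σx : Matrix (Fin 2) (Fin 2) ℂ := !![0, 1; 1, 0]

theorem σz_isHermitian : σz.IsHermitian := by
  ext i j; fin_cases i <;> fin_cases j <;> simp [σz]

theorem σx_isHermitian : σx.IsHermitian := by
  ext i j; fin_cases i <;> fin_cases j <;> simp [σx]

theorem σz_mul_self : σz * σz = 1 := by
  ext i j; fin_cases i <;> fin_cases j <;> simp [σz]

theorem σx_mul_self : σx * σx = 1 := by
  ext i j; fin_cases i <;> fin_cases j <;> simp [σx]

theorem σz_mul_σx : σz * σx = -(σx * σz) := by
  ext i j; fin_cases i <;> fin_cases j <;> simp [σz, σx]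

theorem trace_σz : σz.trace = 0 := by
  simp [σz, Matrix.trace]

theorem trace_σx : σx.trace = 0 := by
  simp [σx, Matrix.trace]

/-- The projection onto the `+1`-eigenspace of an involution `A`. -/
def eigenProj (A : Matrix (Fin 2) (Fin 2) ℂ) : Matrix (Fin 2) (Fin 2) ℂ := (1 / 2 : ℂ) • (1 + A)

theorem isDensityMatrix_eigenProj {A : Matrix (Fin 2) (Fin 2) ℂ} (hA : A.IsHermitian)
    (hAA : A * A = 1) (htr : A.trace = 0) : IsDensityMatrix (eigenProj A) := by
  refine ⟨Matrix.posSemidef_half_smul_one_add hA hAA, ?_⟩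
  rw [eigenProj, Matrix.trace_smul, Matrix.trace_add, htr, Matrix.trace_one]
  norm_num

theorem separableState_eigenProj {A B : Matrix (Fin 2) (Fin 2) ℂ} (hA : A.IsHermitian)
    (hAA : A * A = 1) (hAtr : A.trace = 0) (hB : B.IsHermitian) (hBB : B * B = 1)
    (hBtr : B.trace = 0) :
    SeparableState
      ((1 / 2 : ℂ) • (eigenProj A ⊗ₖ eigenProj B + eigenProj (-A) ⊗ₖ eigenProj (-B))) :=
  separableState_half_smul_add (isDensityMatrix_eigenProj hA hAA hAtr)
    (isDensityMatrix_eigenProj hA.neg (by rwa [neg_mul_neg])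
      (by rw [Matrix.trace_neg, hAtr, neg_zero]))
    (isDensityMatrix_eigenProj hB hBB hBtr)
    (isDensityMatrix_eigenProj hB.neg (by rwa [neg_mul_neg])
      (by rw [Matrix.trace_neg, hBtr, neg_zero]))

def zzState : Matrix (Fin 2 × Fin 2) (Fin 2 × Fin 2) ℂ :=
  (1 / 2 : ℂ) • (eigenProj σz ⊗ₖ eigenProj σz + eigenProj (-σz) ⊗ₖ eigenProj (-σz))

def xxState : Matrix (Fin 2 × Fin 2) (Fin 2 × Fin 2) ℂ :=
  (1 / 2 : ℂ) • (eigenProj σx ⊗ₖ eigenProj σx + eigenProj (-σx) ⊗ₖ eigenProj (-σx))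

theorem trace_zzState_mul : (zzState * (σz ⊗ₖ σz)).trace = 1 := by
  norm_num [zzState, eigenProj, σz, Matrix.trace, Matrix.mul_apply, Fintype.sum_prod_type]

theorem trace_xxState_mul : (xxState * (σx ⊗ₖ σx)).trace = 1 := by
  norm_num [xxState, eigenProj, σx, Matrix.trace, Matrix.mul_apply, Fintype.sum_prod_type]

theorem ptraceLeft_zzState_eq_ptraceRight_xxState :
    ptraceLeft zzState = ptraceRight xxState := by
  ext i j
  fin_cases i <;> fin_cases j <;>
    norm_num [ptraceLeft, ptraceRight, zzState, xxState, eigenProj, σz, σx]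

theorem σzσz_one_mul_one_σxσx :
    σz ⊗ₖ σz ⊗ₖ (1 : Matrix (Fin 2) (Fin 2) ℂ) * ((1 : Matrix (Fin 2) (Fin 2) ℂ) ⊗ₖ σx ⊗ₖ σx) =
      -((1 : Matrix (Fin 2) (Fin 2) ℂ) ⊗ₖ σx ⊗ₖ σx * (σz ⊗ₖ σz ⊗ₖ 1)) := by
  simp only [← Matrix.mul_kronecker_mul, Matrix.mul_one, Matrix.one_mul, σz_mul_σx]
  rw [← neg_one_smul ℂ (σx * σz), Matrix.kronecker_smul, Matrix.smul_kronecker, neg_one_smul]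

theorem not_exists_extension_of_trace_mul_eq_one
    {ρ₁₂ ρ₂₃ : Matrix (Fin 2 × Fin 2) (Fin 2 × Fin 2) ℂ}
    (h₁₂ : (ρ₁₂ * (σz ⊗ₖ σz)).trace = 1) (h₂₃ : (ρ₂₃ * (σx ⊗ₖ σx)).trace = 1) :
    ¬ ∃ ρ : Matrix ((Fin 2 × Fin 2) × Fin 2) ((Fin 2 × Fin 2) × Fin 2) ℂ,
      IsDensityMatrix ρ ∧ ptraceRight ρ = ρ₁₂ ∧ ptrace1of3 ρ = ρ₂₃ := by
  rintro ⟨ρ, ⟨hρ, htr⟩, rfl, rfl⟩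
  have hZZ : ρ * (σz ⊗ₖ σz ⊗ₖ 1) = ρ :=
    hρ.mul_eq_self_of_trace_mul_eq_trace
      ((σz_isHermitian.kronecker σz_isHermitian).kronecker Matrix.isHermitian_one)
      (Matrix.kronecker_mul_self_eq_one (Matrix.kronecker_mul_self_eq_one σz_mul_self σz_mul_self)
        (Matrix.one_mul 1))
      (by rw [trace_mul_kronecker_one, h₁₂, htr])
  have hXX : ρ * (1 ⊗ₖ σx ⊗ₖ σx) = ρ :=
    hρ.mul_eq_self_of_trace_mul_eq_trace
      ((Matrix.isHermitian_one.kronecker σx_isHermitian).kronecker σx_isHermitian)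
      (Matrix.kronecker_mul_self_eq_one (Matrix.kronecker_mul_self_eq_one (Matrix.one_mul 1)
        σx_mul_self) σx_mul_self)
      (by rw [trace_mul_one_kronecker_kronecker, h₂₃, htr])
  have htr_neg := congrArg Matrix.trace
    (eq_neg_of_mul_eq_self_of_anticommute hZZ hXX σzσz_one_mul_one_σxσx)
  rw [Matrix.trace_neg, htr] at htr_neg
  norm_num at htr_neg

end Qubit

/-- There is a compatible pair of separable density matrices on ℂ²⊗ℂ² with no common
extension. -/
theorem stmt10 :
    ∃ (ρ₁₂ ρ₂₃ : Matrix (Fin 2 × Fin 2) (Fin 2 × Fin 2) ℂ),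
      IsDensityMatrix ρ₁₂ ∧ IsDensityMatrix ρ₂₃ ∧
      SeparableState ρ₁₂ ∧ SeparableState ρ₂₃ ∧
      ptraceLeft ρ₁₂ = ptraceRight ρ₂₃ ∧
      ¬ ∃ ρ₁₂₃ : Matrix ((Fin 2 × Fin 2) × Fin 2) ((Fin 2 × Fin 2) × Fin 2) ℂ,
        IsDensityMatrix ρ₁₂₃ ∧ ptraceRight ρ₁₂₃ = ρ₁₂ ∧ ptrace1of3 ρ₁₂₃ = ρ₂₃ := by
  have hzz : SeparableState Qubit.zzState := Qubit.separableState_eigenProj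
    Qubit.σz_isHermitian Qubit.σz_mul_self Qubit.trace_σz
    Qubit.σz_isHermitian Qubit.σz_mul_self Qubit.trace_σz
  have hxx : SeparableState Qubit.xxState := Qubit.separableState_eigenProj
    Qubit.σx_isHermitian Qubit.σx_mul_self Qubit.trace_σx
    Qubit.σx_isHermitian Qubit.σx_mul_self Qubit.trace_σx
  exact ⟨_, _, hzz.isDensityMatrix, hxx.isDensityMatrix, hzz, hxx,
    Qubit.ptraceLeft_zzState_eq_ptraceRight_xxState,
    Qubit.not_exists_extension_of_trace_mul_eq_one Qubit.trace_zzState_mul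
      Qubit.trace_xxState_mul⟩
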